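/- For any star graph K_{1,n} on n + 1 ≥ 2 vertices, γ(M(K_{1,n})) = n, where γ denotes the domination number. -/

import Mathlib

/-- `S` is a dominating set of the graph `H`. -/
def IsDomSet {V : Type*} (H : SimpleGraph V) (S : Set V) : Prop :=
  ∀ v : V, v ∈ S ∨ ∃ s ∈ S, H.Adj v s

/-- The domination number of a graph `H`. -/
noncomputable def domNum {V : Type*} (H : SimpleGraph V) : ℕ :=
  sInf {k : ℕ | ∃ S : Set V, IsDomSet H S ∧ S.ncard = k}

/-- The middle graph `M(G)` of a graph `G`: its vertices are the vertices and edges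
of `G`; a vertex is adjacent to the edges incident to it, and two edges are adjacent
iff they are distinct and share an endpoint. -/
def middleGraph {V : Type*} (G : SimpleGraph V) : SimpleGraph (V ⊕ G.edgeSet) where
  Adj x y :=
    match x, y with
    | Sum.inl _, Sum.inl _ => False
    | Sum.inl v, Sum.inr e => v ∈ (e : Sym2 V)
    | Sum.inr e, Sum.inl v => v ∈ (e : Sym2 V)
    | Sum.inr e, Sum.inr f => e ≠ f ∧ ∃ v, v ∈ (e : Sym2 V) ∧ v ∈ (f : Sym2 V)
  symm := by
    constructor
    rintro (v | e) (w | f) h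
    · exact h.elim
    · exact h
    · exact h
    · exact ⟨Ne.symm h.1, h.2.imp fun v hv => ⟨hv.2, hv.1⟩⟩
  loopless := by
    constructor
    rintro (v | e) h
    · exact h.elim
    · exact h.1 rfl

/-- The star graph `K_{1,n}`: the vertex `0` is the center, adjacent to the `n` leaves. -/
def starGraph (n : ℕ) : SimpleGraph (Fin (n + 1)) where
  Adj x y := x ≠ y ∧ (x = 0 ∨ y = 0)
  symm := by
    constructor
    rintro x y ⟨h1, h2⟩
    exact ⟨h1.symm, h2.symm⟩
  loopless := by
    constructor
    rintro x ⟨h1, _⟩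
    exact h1 rfl

/-! The `n` edges of `K_{1,n}` dominate `M(K_{1,n})`: each edge dominates its two endpoints and
all edges are pairwise adjacent. Conversely, the closed neighbourhood of a leaf `v` in the middle
graph is `{v, e_v}`, where `e_v` is the edge at `v`; these `n` sets are pairwise disjoint, so a
dominating set needs a separate element in each. -/

open Set

section Domination

variable {V : Type*} {H : SimpleGraph V}

def closedNbhd (H : SimpleGraph V) (v : V) : Set V :=
  {w | w = v ∨ H.Adj v w}

theorem IsDomSet.exists_mem_closedNbhd {S : Set V} (hS : IsDomSet H S) (v : V) :
    ∃ s ∈ S, s ∈ closedNbhd H v := by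
  rcases hS v with hv | ⟨s, hs, hadj⟩
  · exact ⟨v, hv, Or.inl rfl⟩
  · exact ⟨s, hs, Or.inr hadj⟩

theorem isDomSet_univ : IsDomSet H univ :=
  fun v => Or.inl (mem_univ v)

theorem domNum_le_ncard {S : Set V} (hS : IsDomSet H S) : domNum H ≤ S.ncard :=
  Nat.sInf_le ⟨S, hS, rfl⟩

theorem IsDomSet.ncard_le_of_pairwiseDisjoint [Finite V] {S s : Set V} (hS : IsDomSet H S)
    (hs : s.PairwiseDisjoint (closedNbhd H)) : s.ncard ≤ S.ncard := by
  choose g hgS hgN using hS.exists_mem_closedNbhd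
  refine ncard_le_ncard_of_injOn g (fun v _ => hgS v) ?_
  intro v hv w hw hvw
  by_contra hne
  exact (hs hv hw hne).ne_of_mem (hgN v) (hvw ▸ hgN w) rfl

theorem ncard_le_domNum_of_pairwiseDisjoint [Finite V] {s : Set V}
    (hs : s.PairwiseDisjoint (closedNbhd H)) : s.ncard ≤ domNum H := by
  obtain ⟨S, hS, hcard⟩ : domNum H ∈ {k | ∃ S : Set V, IsDomSet H S ∧ S.ncard = k} :=
    Nat.sInf_mem ⟨_, univ, isDomSet_univ, rfl⟩
  exact hcard ▸ hS.ncard_le_of_pairwiseDisjoint hs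

end Domination

section MiddleGraph

variable {V : Type*} {G : SimpleGraph V}

theorem isDomSet_range_inr_middleGraph (h : ∀ v, ∃ w, G.Adj v w) :
    IsDomSet (middleGraph G) (range Sum.inr) := by
  rintro (v | e)
  · obtain ⟨w, hvw⟩ := h v
    exact Or.inr ⟨Sum.inr ⟨s(v, w), hvw⟩, mem_range_self _, Sym2.mem_mk_left v w⟩
  · exact Or.inl (mem_range_self e)

theorem domNum_middleGraph_le_card_edgeSet (h : ∀ v, ∃ w, G.Adj v w) :
    domNum (middleGraph G) ≤ Nat.card G.edgeSet :=
  ncard_range_of_injective Sum.inr_injective ▸ domNum_le_ncard (isDomSet_range_inr_middleGraph h)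

theorem disjoint_closedNbhd_middleGraph_inl {v w : V} (hne : v ≠ w) (hadj : ¬G.Adj v w) :
    Disjoint (closedNbhd (middleGraph G) (Sum.inl v)) (closedNbhd (middleGraph G) (Sum.inl w)) := by
  rw [Set.disjoint_left]
  rintro (u | e) hv hw
  · have hv : u = v := by simpa [closedNbhd, middleGraph] using hv
    have hw : u = w := by simpa [closedNbhd, middleGraph] using hw
    exact hne (hv.symm.trans hw)
  · have hv : v ∈ (e : Sym2 V) := by simpa [closedNbhd, middleGraph] using hv
    have hw : w ∈ (e : Sym2 V) := by simpa [closedNbhd, middleGraph] using hw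
    have he : (e : Sym2 V) = s(v, w) := (Sym2.mem_and_mem_iff hne).mp ⟨hv, hw⟩
    exact hadj (G.mem_edgeSet.mp (he ▸ e.2))

theorem SimpleGraph.IsIndepSet.ncard_le_domNum_middleGraph [Finite V] {s : Set V}
    (hs : G.IsIndepSet s) : s.ncard ≤ domNum (middleGraph G) := by
  have hdisj : (Sum.inl '' s).PairwiseDisjoint (closedNbhd (middleGraph G)) :=
    (Sum.inl_injective.injOn).pairwiseDisjoint_image.mpr
      fun v hv w hw hne => disjoint_closedNbhd_middleGraph_inl hne (hs hv hw hne)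
  rw [← ncard_image_of_injective s Sum.inl_injective]
  exact ncard_le_domNum_of_pairwiseDisjoint hdisj

end MiddleGraph

theorem starGraph_exists_adj {n : ℕ} (hn : 1 ≤ n) (v : Fin (n + 1)) :
    ∃ w, (starGraph n).Adj v w := by
  by_cases hv : v = 0
  · refine ⟨Fin.succ ⟨0, hn⟩, ?_, Or.inl hv⟩
    exact hv ▸ (Fin.succ_ne_zero _).symm
  · exact ⟨0, hv, Or.inr rfl⟩

theorem isIndepSet_starGraph_leaves (n : ℕ) : (starGraph n).IsIndepSet {0}ᶜ :=
  fun _ hv _ hw _ hadj => hadj.2.elim hv hw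

theorem ncard_starGraph_leaves (n : ℕ) : ({0}ᶜ : Set (Fin (n + 1))).ncard = n := by
  rw [← Fin.range_succ, ncard_range_of_injective (Fin.succ_injective n), Nat.card_eq_fintype_card,
    Fintype.card_fin]

theorem edgeSet_starGraph_subset (n : ℕ) :
    (starGraph n).edgeSet ⊆ (fun i => s(0, i)) '' {0}ᶜ := by
  intro e he
  induction e using Sym2.ind with
  | _ a b =>
    obtain ⟨hab, rfl | rfl⟩ := he
    · exact ⟨b, hab.symm, rfl⟩
    · exact ⟨a, hab, Sym2.eq_swap⟩

theorem card_edgeSet_starGraph_le (n : ℕ) : Nat.card (starGraph n).edgeSet ≤ n :=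
  calc Nat.card (starGraph n).edgeSet
      = (starGraph n).edgeSet.ncard := Nat.card_coe_set_eq _
    _ ≤ ((fun i => s(0, i)) '' ({0}ᶜ : Set (Fin (n + 1)))).ncard :=
        ncard_le_ncard (edgeSet_starGraph_subset n)
    _ ≤ ({0}ᶜ : Set (Fin (n + 1))).ncard := ncard_image_le (toFinite _)
    _ = n := ncard_starGraph_leaves n

/-- For any star graph `K_{1,n}` on `n + 1 ≥ 2` vertices,
`γ(M(K_{1,n})) = n`. -/
theorem domNum_middle_star (n : ℕ) (hn : 1 ≤ n) :
    domNum (middleGraph (starGraph n)) = n := by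
  refine le_antisymm ?_ ?_
  · exact (domNum_middleGraph_le_card_edgeSet (starGraph_exists_adj hn)).trans
      (card_edgeSet_starGraph_le n)
  · calc n = ({0}ᶜ : Set (Fin (n + 1))).ncard := (ncard_starGraph_leaves n).symm
      _ ≤ domNum (middleGraph (starGraph n)) :=
        (isIndepSet_starGraph_leaves n).ncard_le_domNum_middleGraph
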